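/- arXiv:1202.6638 — 5 statements merged into one kernel-verified Lean document; each statement's English description precedes it below -/
import Mathlib

section
/- Let Ω ⊆ ℂ^N be a pseudoconvex domain, φ : Ω → Ω a holomorphic map and (n_l) a strictly increasing sequence of natural numbers. If C_φ is hypercyclic with respect to (n_l), then: (1) φ is injective; (2) the image φ(Ω) is a Runge domain with respect to Ω; (3) the sequence of iterates (φ^{n_l})_l is run-away. -/
open Set Filter Topology Metric

noncomputable section

/-- ℂ^N -/
abbrev CN (N : ℕ) := Fin N → ℂ

/-- A domain: a nonempty open connected set. -/
def CNDomain {N : ℕ} (Ω : Set (CN N)) : Prop :=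
  IsOpen Ω ∧ IsConnected Ω

/-- The holomorphic hull of `K` with respect to `Ω`. -/
def holHull {N : ℕ} (Ω K : Set (CN N)) : Set (CN N) :=
  {z | z ∈ Ω ∧ ∀ f : CN N → ℂ, DifferentiableOn ℂ f Ω → ‖f z‖ ≤ ⨆ w ∈ K, ‖f w‖}

/-- `K` is `Ω`-convex if it equals its holomorphic hull w.r.t. `Ω`. -/
def OmegaConvex {N : ℕ} (Ω K : Set (CN N)) : Prop := holHull Ω K = K

/-- Pseudoconvexity, via the solution of the Levi problem: holomorphic convexity. -/
def Pseudoconvex {N : ℕ} (Ω : Set (CN N)) : Prop :=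
  ∀ K : Set (CN N), K ⊆ Ω → IsCompact K → IsCompact (holHull Ω K)

/-- The hull of a compact set `A ⊆ ℂ` with respect to entire functions. -/
def entireHull (A : Set ℂ) : Set ℂ :=
  {w | ∀ f : ℂ → ℂ, Differentiable ℂ f → ‖f w‖ ≤ ⨆ a ∈ A, ‖f a‖}

/-- `U` is a Runge domain with respect to `Ω`: every function holomorphic on `U` is a
locally uniform limit on `U` of (restrictions of) functions holomorphic on `Ω`. -/
def RungeIn {N : ℕ} (U Ω : Set (CN N)) : Prop :=
  ∀ f : CN N → ℂ, DifferentiableOn ℂ f U →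
    ∀ K : Set (CN N), K ⊆ U → IsCompact K → ∀ ε : ℝ, 0 < ε →
      ∃ g : CN N → ℂ, DifferentiableOn ℂ g Ω ∧ ∀ z ∈ K, ‖g z - f z‖ < ε

/-- `C_φ` is hypercyclic with respect to the sequence `(n l)`. -/
def HypercyclicWrt {N : ℕ} (Ω : Set (CN N)) (φ : CN N → CN N) (n : ℕ → ℕ) : Prop :=
  ∃ f : CN N → ℂ, DifferentiableOn ℂ f Ω ∧
    ∀ g : CN N → ℂ, DifferentiableOn ℂ g Ω →
      ∀ K : Set (CN N), K ⊆ Ω → IsCompact K → ∀ ε : ℝ, 0 < ε →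
        ∃ l : ℕ, ∀ z ∈ K, ‖f (φ^[n l] z) - g z‖ < ε

/-- `C_φ` is hereditarily hypercyclic with respect to `(n l)`:
it is hypercyclic with respect to every subsequence. -/
def HereditarilyHypercyclicWrt {N : ℕ} (Ω : Set (CN N)) (φ : CN N → CN N) (n : ℕ → ℕ) : Prop :=
  ∀ k : ℕ → ℕ, StrictMono k → HypercyclicWrt Ω φ (n ∘ k)

/-- A sequence of self-maps of `Ω` is run-away. -/
def RunAway {N : ℕ} (Ω : Set (CN N)) (f : ℕ → CN N → CN N) : Prop :=
  ∀ K : Set (CN N), K ⊆ Ω → IsCompact K → ∀ L : Set (CN N), L ⊆ Ω → IsCompact L →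
    ∃ l : ℕ, Disjoint (f l '' K) L

/-- A sequence of self-maps of `Ω` is compactly divergent. -/
def CompactlyDivergent {N : ℕ} (Ω : Set (CN N)) (f : ℕ → CN N → CN N) : Prop :=
  ∀ K : Set (CN N), K ⊆ Ω → IsCompact K → ∀ L : Set (CN N), L ⊆ Ω → IsCompact L →
    ∃ l₀ : ℕ, ∀ l ≥ l₀, Disjoint (f l '' K) L

/-- The Möbius pseudodistance `c*_Ω(z, w)`. -/
def mobiusDist {N : ℕ} (Ω : Set (CN N)) (z w : CN N) : ℝ :=
  sSup {r : ℝ | ∃ F : CN N → ℂ, DifferentiableOn ℂ F Ω ∧ (∀ x ∈ Ω, ‖F x‖ < 1) ∧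
    F w = 0 ∧ r = ‖F z‖}

/-- The Carathéodory pseudodistance `c_Ω(z, w)`. -/
def caratDist {N : ℕ} (Ω : Set (CN N)) (z w : CN N) : ℝ :=
  Real.log ((1 + mobiusDist Ω z w) / (1 - mobiusDist Ω z w))

/-- `Ω` is a hypercyclic domain: the necessary conditions (c1), (c2), (c3) are
sufficient for hypercyclicity in `Ω`. -/
def HypercyclicDomain {N : ℕ} (Ω : Set (CN N)) : Prop :=
  ∀ φ : CN N → CN N, DifferentiableOn ℂ φ Ω → MapsTo φ Ω Ω →
    ∀ n : ℕ → ℕ, StrictMono n →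
      InjOn φ Ω → RungeIn (φ '' Ω) Ω → RunAway Ω (fun l => φ^[n l]) →
        HypercyclicWrt Ω φ n

/-- A sequence of maps from a planar set `D` to `Ω ⊆ ℂ^N` is compactly divergent. -/
def CompactlyDivergentFrom {N : ℕ} (D : Set ℂ) (Ω : Set (CN N)) (f : ℕ → ℂ → CN N) : Prop :=
  ∀ K : Set ℂ, K ⊆ D → IsCompact K → ∀ L : Set (CN N), L ⊆ Ω → IsCompact L →
    ∃ n₀ : ℕ, ∀ n ≥ n₀, Disjoint (f n '' K) L

/-- `Ω` is taut. -/
def Taut {N : ℕ} (Ω : Set (CN N)) : Prop :=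
  ∀ f : ℕ → ℂ → CN N,
    (∀ n, DifferentiableOn ℂ (f n) (ball (0 : ℂ) 1)) →
    (∀ n, MapsTo (f n) (ball (0 : ℂ) 1) Ω) →
    CompactlyDivergentFrom (ball (0 : ℂ) 1) Ω f ∨
      ∃ k : ℕ → ℕ, StrictMono k ∧ ∃ g : ℂ → CN N,
        DifferentiableOn ℂ g (ball (0 : ℂ) 1) ∧ MapsTo g (ball (0 : ℂ) 1) Ω ∧
        TendstoLocallyUniformlyOn (fun m => f (k m)) g atTop (ball (0 : ℂ) 1)

/-!
If `f` is universal for `C_φ` along `(n l)`, then `f` cannot approximate both `g` and `g + 2` at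
the same point, so every `g ∈ O(Ω)` is approximated on compacts by some `f ∘ φ^[m + 1] - c`,
i.e. by a function of `φ`. Applied to the coordinates this gives holomorphic approximate left
inverses `G` of `φ`: `G ∘ φ ≈ id`. Injectivity of `φ` follows at once; by the Cauchy estimates
`G'(φ z) ∘ φ'(z) ≈ id`, so `φ'(z)` is invertible and `φ` is a local, hence (being injective) a
global biholomorphism onto its image. A compact subset of `φ(Ω)` is thus the image of a compact
subset of `Ω`, on which `h ∘ φ` is approximated by functions of `φ`: this is the Runge property.
Finally, if `φ^[n l] K` met a fixed compact `L` for every `l`, `f` could not approximate a constant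
larger than `sup_L |f|` on `K`.
-/

open Function

section ComplexDifferentiable

variable {E F : Type*} [NormedAddCommGroup E] [NormedSpace ℂ E]
  [NormedAddCommGroup F] [NormedSpace ℂ F]

/-- By the Schwarz lemma, `f - f'(x)` is Lipschitz with a small constant on small balls. -/
theorem DifferentiableOn.hasStrictFDerivAt {f : E → F} {s : Set E} {x : E}
    (hf : DifferentiableOn ℂ f s) (hs : s ∈ 𝓝 x) : HasStrictFDerivAt f (fderiv ℂ f x) x := by
  set A := fderiv ℂ f x
  set u : E → F := fun z => f z - A z
  have hlin : (fun z => u z - u x) =o[𝓝 x] fun z => z - x := by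
    simpa [u, map_sub, sub_sub_sub_comm] using
      (hf.differentiableAt hs).hasFDerivAt.isLittleO
  rw [hasStrictFDerivAt_iff_isLittleO]
  refine Asymptotics.IsLittleO.of_bound fun c hc => ?_
  obtain ⟨δ, hδ, hball⟩ := Metric.eventually_nhds_iff.1
    ((eventually_mem_set.2 hs).and (hlin.def (by positivity : 0 < c / 3)))
  have hδ3 : 0 < δ / 3 := by positivity
  filter_upwards [prod_mem_nhds (ball_mem_nhds x hδ3) (ball_mem_nhds x hδ3)]
    with ⟨y, z⟩ ⟨hy, hz⟩
  have hsub : ball z (2 * (δ / 3)) ⊆ ball x δ := by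
    intro w hw
    have := dist_triangle w z x
    rw [mem_ball] at hw hz ⊢
    linarith
  have hnear : ∀ w ∈ ball x δ, ‖u w - u x‖ ≤ c / 3 * δ := fun w hw =>
    (hball hw).2.trans (by gcongr; rw [← dist_eq_norm]; exact (mem_ball.1 hw).le)
  have hdiff : DifferentiableOn ℂ u (ball z (2 * (δ / 3))) :=
    ((hf.mono fun w hw => (hball (hsub hw)).1).sub A.differentiable.differentiableOn)
  have hmaps : MapsTo u (ball z (2 * (δ / 3))) (closedBall (u z) (2 * (c / 3 * δ))) := by
    intro w hw
    rw [mem_closedBall, dist_eq_norm]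
    calc ‖u w - u z‖ ≤ ‖u w - u x‖ + ‖u x - u z‖ := norm_sub_le_norm_sub_add_norm_sub _ _ _
      _ ≤ 2 * (c / 3 * δ) := by
        rw [norm_sub_rev (u x)]
        linarith [hnear w (hsub hw), hnear z (mem_ball.2 (by linarith [mem_ball.1 hz]))]
  have hyz : y ∈ ball z (2 * (δ / 3)) := by
    have := dist_triangle_right y z x
    rw [mem_ball] at hy hz ⊢
    linarith
  have key := Complex.dist_le_div_mul_dist_of_mapsTo_ball hdiff hmaps hyz
  have hconst : 2 * (c / 3 * δ) / (2 * (δ / 3)) = c := by field_simp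
  rw [hconst, dist_eq_norm, dist_eq_norm] at key
  simpa [u, map_sub, sub_sub_sub_comm] using key

theorem DifferentiableOn.isLocalHomeomorphOn [FiniteDimensional ℂ E] {f : E → E} {s : Set E}
    (hf : DifferentiableOn ℂ f s) (hs : IsOpen s)
    (hinj : ∀ x ∈ s, Injective (fderiv ℂ f x)) : IsLocalHomeomorphOn f s := by
  intro x hx
  let A : E ≃L[ℂ] E :=
    (LinearEquiv.ofInjectiveEndo (fderiv ℂ f x : E →ₗ[ℂ] E) (hinj x hx)).toContinuousLinearEquiv
  have hA : HasStrictFDerivAt f (A : E →L[ℂ] E) x := hf.hasStrictFDerivAt (hs.mem_nhds hx)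
  exact ⟨hA.toOpenPartialHomeomorph f, hA.mem_toOpenPartialHomeomorph_source, rfl⟩

/-- Cauchy estimates: `G'(φ x) ∘ φ'(x)` is within `1 / 2` of the identity. -/
theorem injective_fderiv_of_norm_comp_sub_le {φ : E → F} {G : F → E} {x : E} {r : ℝ}
    (hr : 0 < r) (hGφ : DifferentiableOn ℂ (G ∘ φ) (ball x r))
    (hG : DifferentiableAt ℂ G (φ x)) (hφ : DifferentiableAt ℂ φ x)
    (hclose : ∀ z ∈ ball x r, ‖G (φ z) - z‖ ≤ r / 4) : Injective (fderiv ℂ φ x) := by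
  set u : E → E := fun z => G (φ z) - z
  have hmaps : MapsTo u (ball x r) (closedBall (u x) (r / 2)) := by
    intro z hz
    rw [mem_closedBall, dist_eq_norm]
    calc ‖u z - u x‖ ≤ ‖u z‖ + ‖u x‖ := norm_sub_le _ _
      _ ≤ r / 2 := by linarith [hclose z hz, hclose x (mem_ball_self hr)]
  have hbound : ‖fderiv ℂ u x‖ ≤ r / 2 / r :=
    Complex.norm_fderiv_le_div_of_mapsTo_ball (hGφ.sub differentiableOn_id) hmaps hr
  have hderiv :
      fderiv ℂ u x = (fderiv ℂ G (φ x)).comp (fderiv ℂ φ x) - ContinuousLinearMap.id ℂ E :=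
    ((hG.hasFDerivAt.comp x hφ.hasFDerivAt).sub (hasFDerivAt_id x)).fderiv
  rw [injective_iff_map_eq_zero]
  intro v hv
  have hu : fderiv ℂ u x v = -v := by simp [hderiv, hv]
  have : ‖v‖ ≤ 1 / 2 * ‖v‖ := by
    calc ‖v‖ = ‖fderiv ℂ u x v‖ := by rw [hu, norm_neg]
      _ ≤ ‖fderiv ℂ u x‖ * ‖v‖ := (fderiv ℂ u x).le_opNorm v
      _ ≤ 1 / 2 * ‖v‖ := by
        gcongr
        rwa [show r / 2 / r = 1 / 2 by field_simp] at hbound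
  exact norm_le_zero_iff.1 (by linarith [norm_nonneg v])

end ComplexDifferentiable

theorem IsLocalHomeomorphOn.isCompact_inter_preimage {X Y : Type*} [TopologicalSpace X]
    [TopologicalSpace Y] {f : X → Y} {s : Set X} {K : Set Y} (hf : IsLocalHomeomorphOn f s)
    (hs : IsOpen s) (hinj : InjOn f s) (hK : IsCompact K) (hKs : K ⊆ f '' s) :
    IsCompact (s ∩ f ⁻¹' K) := by
  have hloc : IsLocalHomeomorph (f ∘ ((↑) : s → X)) :=
    isLocalHomeomorph_iff_isLocalHomeomorphOn_univ.2 <|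
      (hf.comp hs.isOpenEmbedding_subtypeVal.isLocalHomeomorph.isLocalHomeomorphOn
        fun x _ => x.2)
  have hemb := hloc.isOpenEmbedding_of_injective (injOn_iff_injective.1 hinj)
  have hcpt := hemb.isInducing.isCompact_preimage' hK (by rwa [range_comp, Subtype.range_coe])
  rw [← Subtype.image_preimage_coe]
  exact hcpt.image continuous_subtype_val

namespace HypercyclicWrt

variable {N : ℕ} {Ω : Set (CN N)} {φ : CN N → CN N} {n : ℕ → ℕ}

theorem exists_comp_approx (hhyp : HypercyclicWrt Ω φ n) (hφd : DifferentiableOn ℂ φ Ω)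
    (hφm : MapsTo φ Ω Ω) {g : CN N → ℂ} (hg : DifferentiableOn ℂ g Ω) {C : Set (CN N)}
    (hCΩ : C ⊆ Ω) (hC : IsCompact C) {ε : ℝ} (hε : 0 < ε) :
    ∃ G : CN N → ℂ, DifferentiableOn ℂ G Ω ∧ ∀ z ∈ C, ‖G (φ z) - g z‖ < ε := by
  obtain ⟨f, hf, huniv⟩ := hhyp
  rcases C.eq_empty_or_nonempty with rfl | ⟨z₀, hz₀⟩
  · exact ⟨g, hg, by simp⟩
  have happrox (c : ℂ) : ∃ l, ∀ z ∈ C, ‖f (φ^[n l] z) - (g z + c)‖ < min ε 1 :=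
    huniv _ (hg.add_const c) C hCΩ hC _ (lt_min hε one_pos)
  have hfactor (c : ℂ) (l : ℕ) (hl : n l ≠ 0)
      (h : ∀ z ∈ C, ‖f (φ^[n l] z) - (g z + c)‖ < min ε 1) :
      ∃ G : CN N → ℂ, DifferentiableOn ℂ G Ω ∧ ∀ z ∈ C, ‖G (φ z) - g z‖ < ε := by
    obtain ⟨m, hm⟩ := Nat.exists_eq_succ_of_ne_zero hl
    refine ⟨fun w => f (φ^[m] w) - c,
      (hf.comp (hφd.iterate hφm m) (hφm.iterate m)).sub_const c, fun z hz => ?_⟩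
    have hz' := h z hz
    rw [hm, iterate_succ_apply, ← sub_sub, sub_right_comm] at hz'
    exact hz'.trans_le (min_le_left _ _)
  obtain ⟨l₀, h₀⟩ := happrox 0
  obtain ⟨l₂, h₂⟩ := happrox 2
  by_cases hl₀ : n l₀ = 0
  · by_cases hl₂ : n l₂ = 0
    · have e₀ := (h₀ z₀ hz₀).trans_le (min_le_right _ _)
      have e₂ := (h₂ z₀ hz₀).trans_le (min_le_right _ _)
      rw [hl₀, iterate_zero_apply, add_zero] at e₀
      rw [hl₂, iterate_zero_apply] at e₂
      have : (2 : ℝ) ≤ ‖f z₀ - g z₀‖ + ‖f z₀ - (g z₀ + 2)‖ := by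
        calc (2 : ℝ) = ‖(f z₀ - g z₀) - (f z₀ - (g z₀ + 2))‖ := by norm_num
          _ ≤ _ := norm_sub_le _ _
      linarith
    · exact hfactor 2 l₂ hl₂ h₂
  · exact hfactor 0 l₀ hl₀ h₀

theorem exists_left_inverse_approx (hhyp : HypercyclicWrt Ω φ n) (hφd : DifferentiableOn ℂ φ Ω)
    (hφm : MapsTo φ Ω Ω) {C : Set (CN N)} (hCΩ : C ⊆ Ω) (hC : IsCompact C) {ε : ℝ}
    (hε : 0 < ε) :
    ∃ G : CN N → CN N, DifferentiableOn ℂ G Ω ∧ ∀ z ∈ C, ‖G (φ z) - z‖ < ε := by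
  have hcoord (i : Fin N) := hhyp.exists_comp_approx hφd hφm
    (ContinuousLinearMap.proj (R := ℂ) (φ := fun _ : Fin N => ℂ) i).differentiable.differentiableOn
    hCΩ hC hε
  choose G hGd hG using hcoord
  exact ⟨fun w i => G i w, differentiableOn_pi.2 hGd,
    fun z hz => (pi_norm_lt_iff hε).2 fun i => hG i z hz⟩

theorem injOn (hhyp : HypercyclicWrt Ω φ n) (hφd : DifferentiableOn ℂ φ Ω)
    (hφm : MapsTo φ Ω Ω) : InjOn φ Ω := by
  intro a ha b hb hab
  by_contra hne
  obtain ⟨G, -, hG⟩ := hhyp.exists_left_inverse_approx hφd hφm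
    (insert_subset_iff.2 ⟨ha, singleton_subset_iff.2 hb⟩) (isCompact_singleton.insert a)
    (half_pos (norm_pos_iff.2 (sub_ne_zero.2 hne)))
  have hGa := hG a (mem_insert a _)
  have hGb := hG b (mem_insert_of_mem a rfl)
  rw [← hab] at hGb
  have : ‖a - b‖ ≤ ‖G (φ a) - a‖ + ‖G (φ a) - b‖ := by
    calc ‖a - b‖ = ‖(G (φ a) - b) - (G (φ a) - a)‖ := by congr 1; abel
      _ ≤ _ := (norm_sub_le _ _).trans_eq (add_comm _ _)
  linarith

theorem isLocalHomeomorphOn (hhyp : HypercyclicWrt Ω φ n) (hΩ : IsOpen Ω)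
    (hφd : DifferentiableOn ℂ φ Ω) (hφm : MapsTo φ Ω Ω) : IsLocalHomeomorphOn φ Ω := by
  refine hφd.isLocalHomeomorphOn hΩ fun x hx => ?_
  obtain ⟨r, hr, hrΩ⟩ := nhds_basis_closedBall.mem_iff.1 (hΩ.mem_nhds hx)
  obtain ⟨G, hGd, hG⟩ := hhyp.exists_left_inverse_approx hφd hφm hrΩ (isCompact_closedBall x r)
    (by positivity : 0 < r / 4)
  exact injective_fderiv_of_norm_comp_sub_le hr
    ((hGd.comp hφd hφm).mono (ball_subset_closedBall.trans hrΩ))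
    (hGd.differentiableAt (hΩ.mem_nhds (hφm hx))) (hφd.differentiableAt (hΩ.mem_nhds hx))
    fun z hz => (hG z (ball_subset_closedBall hz)).le

theorem rungeIn_image (hhyp : HypercyclicWrt Ω φ n) (hΩ : IsOpen Ω)
    (hφd : DifferentiableOn ℂ φ Ω) (hφm : MapsTo φ Ω Ω) : RungeIn (φ '' Ω) Ω := by
  intro h hh K hKφ hK ε hε
  have hC : IsCompact (Ω ∩ φ ⁻¹' K) :=
    (hhyp.isLocalHomeomorphOn hΩ hφd hφm).isCompact_inter_preimage hΩ (hhyp.injOn hφd hφm) hK hKφ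
  obtain ⟨G, hGd, hG⟩ := hhyp.exists_comp_approx hφd hφm (hh.comp hφd (mapsTo_image φ Ω))
    inter_subset_left hC hε
  refine ⟨G, hGd, fun w hw => ?_⟩
  obtain ⟨z, hz, rfl⟩ := hKφ hw
  exact hG z ⟨hz, hw⟩

theorem runAway (hhyp : HypercyclicWrt Ω φ n) : RunAway Ω fun l => φ^[n l] := by
  intro K hKΩ hK L hLΩ hL
  obtain ⟨f, hf, huniv⟩ := hhyp
  obtain ⟨M, hM⟩ := hL.exists_bound_of_continuousOn (hf.continuousOn.mono hLΩ)
  obtain ⟨l, hl⟩ := huniv (fun _ => ((M + 2 : ℝ) : ℂ)) (differentiableOn_const _) K hKΩ hK 1 one_pos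
  refine ⟨l, disjoint_left.2 ?_⟩
  rintro _ ⟨z, hz, rfl⟩ hzL
  have hM0 : 0 ≤ M := (norm_nonneg _).trans (hM _ hzL)
  have : M + 2 ≤ ‖f (φ^[n l] z)‖ + ‖f (φ^[n l] z) - ((M + 2 : ℝ) : ℂ)‖ := by
    calc M + 2 = ‖((M + 2 : ℝ) : ℂ)‖ := by rw [Complex.norm_real, Real.norm_of_nonneg (by linarith)]
      _ ≤ _ := norm_le_norm_add_norm_sub _ _
  linarith [hl z hz, hM _ hzL]

end HypercyclicWrt

theorem stmt_2_general {N : ℕ} (Ω : Set (CN N)) (hdom : CNDomain Ω)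
    (φ : CN N → CN N) (hφd : DifferentiableOn ℂ φ Ω) (hφm : MapsTo φ Ω Ω)
    (n : ℕ → ℕ)
    (hhyp : HypercyclicWrt Ω φ n) :
    InjOn φ Ω ∧ RungeIn (φ '' Ω) Ω ∧ RunAway Ω (fun l => φ^[n l]) :=
  ⟨hhyp.injOn hφd hφm, hhyp.rungeIn_image hdom.1 hφd hφm, hhyp.runAway⟩

theorem stmt_2 {N : ℕ} (Ω : Set (CN N)) (hdom : CNDomain Ω) (hpsc : Pseudoconvex Ω)
    (φ : CN N → CN N) (hφd : DifferentiableOn ℂ φ Ω) (hφm : MapsTo φ Ω Ω)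
    (n : ℕ → ℕ) (hn : StrictMono n)
    (hhyp : HypercyclicWrt Ω φ n) :
    InjOn φ Ω ∧ RungeIn (φ '' Ω) Ω ∧ RunAway Ω (fun l => φ^[n l]) :=
  stmt_2_general Ω hdom φ hφd hφm n hhyp
end
end

section
/- Let Ω ⊆ ℂ^N be a pseudoconvex domain, φ : Ω → Ω a holomorphic map and (n_l) a strictly increasing sequence of natural numbers. If C_φ is hereditarily hypercyclic with respect to (n_l), then: (1) φ is injective; (2) the image φ(Ω) is a Runge domain with respect to Ω; (3) the sequence of iterates (φ^{n_l})_l is compactly divergent. -/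
open Set Filter Topology Metric

noncomputable section

/-!
Hypercyclicity along `n (l + 1)`, whose exponents are positive, makes the range of `C_φ` dense:
`g` is approximated on compacta by `(f ∘ φ^[n (l + 1) - 1]) ∘ φ`. As holomorphic functions
separate points, `φ` is injective. Approximating the coordinates gives holomorphic `ψ` with
`ψ ∘ φ` uniformly close to the identity on a ball, so by the Schwarz lemma
`‖D(ψ ∘ φ) - 1‖ ≤ 1/2` and `Dφ` is injective. The inverse function theorem then makes `φ` open,
so its inverse on `φ(Ω)` is continuous and every compact subset of `φ(Ω)` is `φ(L)` with `L ⊆ Ω`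
compact; approximating `f ∘ φ` on `L` approximates `f` on `φ(L)`. Finally, a function that is
hypercyclic along a subsequence is bounded on `L` but approximates large constants on `K`, so
along no subsequence can `φ^[n l] '' K` keep meeting `L`.
-/

open Function

namespace Complex

variable {E F : Type*} [NormedAddCommGroup E] [NormedSpace ℂ E] [NormedAddCommGroup F]
  [NormedSpace ℂ F] {f : E → F} {s : Set E} {x : E}

theorem continuousAt_fderiv_of_differentiableOn (hf : DifferentiableOn ℂ f s) (hs : IsOpen s)
    (hx : x ∈ s) : ContinuousAt (fderiv ℂ f) x := by
  set A := fderiv ℂ f x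
  set u : E → F := fun w => f w - A w
  rw [Metric.continuousAt_iff]
  intro ε hε
  have hsmall : ∀ᶠ w in 𝓝 x, ‖u w - u x‖ ≤ ε / 8 * ‖w - x‖ ∧ w ∈ s := by
    have hfx := (hf.differentiableAt (hs.mem_nhds hx)).hasFDerivAt
    refine .and ?_ (hs.mem_nhds hx)
    filter_upwards [(hasFDerivAt_iff_isLittleO.1 hfx).def (by positivity : 0 < ε / 8)] with w hw
    simpa only [u, map_sub, sub_sub_sub_comm] using hw
  obtain ⟨ρ, hρ, hball⟩ := Metric.eventually_nhds_iff_ball.1 hsmall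
  have hbound : ∀ w ∈ ball x ρ, ‖u w - u x‖ ≤ ε / 8 * ρ := fun w hw =>
    (hball w hw).1.trans (by gcongr; exact (mem_ball_iff_norm.1 hw).le)
  refine ⟨ρ / 2, by positivity, fun {a} ha => ?_⟩
  have hsub : ball a (ρ / 2) ⊆ ball x ρ := ball_subset_ball' (by linarith [mem_ball.1 ha])
  have haρ : a ∈ ball x ρ := hsub (mem_ball_self (by positivity))
  have hmaps : MapsTo u (ball a (ρ / 2)) (closedBall (u a) (ε / 4 * ρ)) := by
    intro w hw
    rw [mem_closedBall, dist_eq_norm]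
    calc ‖u w - u a‖ = ‖(u w - u x) - (u a - u x)‖ := by rw [sub_sub_sub_cancel_right]
      _ ≤ ‖u w - u x‖ + ‖u a - u x‖ := norm_sub_le _ _
      _ ≤ ε / 4 * ρ := by linarith [hbound w (hsub hw), hbound a haρ]
  have hderiv : fderiv ℂ u a = fderiv ℂ f a - A :=
    ((hf.differentiableAt (hs.mem_nhds (hball a haρ).2)).hasFDerivAt.sub A.hasFDerivAt).fderiv
  have hcauchy : ‖fderiv ℂ u a‖ ≤ ε / 4 * ρ / (ρ / 2) :=
    norm_fderiv_le_div_of_mapsTo_ball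
      ((hf.sub A.differentiable.differentiableOn).mono fun w hw => (hball w (hsub hw)).2) hmaps
      (by positivity)
  rw [dist_eq_norm, ← hderiv]
  calc ‖fderiv ℂ u a‖ ≤ ε / 4 * ρ / (ρ / 2) := hcauchy
    _ < ε := by field_simp; linarith

theorem hasStrictFDerivAt_of_differentiableOn (hf : DifferentiableOn ℂ f s) (hs : IsOpen s)
    (hx : x ∈ s) : HasStrictFDerivAt f (fderiv ℂ f x) x :=
  hasStrictFDerivAt_of_hasFDerivAt_of_continuousAt
    (eventually_of_mem (hs.mem_nhds hx) fun _ hy =>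
      (hf.differentiableAt (hs.mem_nhds hy)).hasFDerivAt)
    (continuousAt_fderiv_of_differentiableOn hf hs hx)

theorem map_nhds_eq_of_injective_fderiv [FiniteDimensional ℂ E] {f : E → E}
    (hf : DifferentiableOn ℂ f s) (hs : IsOpen s) (hx : x ∈ s)
    (hinj : Injective (fderiv ℂ f x)) : map f (𝓝 x) = 𝓝 (f x) :=
  let e := (LinearEquiv.ofInjectiveEndo (fderiv ℂ f x : E →ₗ[ℂ] E) hinj).toContinuousLinearEquiv
  (hasStrictFDerivAt_of_differentiableOn hf hs hx).map_nhds_eq_of_equiv (f' := e)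

end Complex

namespace Set.InjOn

variable {X Y : Type*} [TopologicalSpace X] [TopologicalSpace Y] [Nonempty X] {f : X → Y}
  {s : Set X}

theorem continuousOn_invFunOn_image (hinj : InjOn f s) (hs : IsOpen s)
    (hopen : ∀ x ∈ s, 𝓝 (f x) ≤ map f (𝓝 x)) : ContinuousOn (invFunOn f s) (f '' s) := by
  rintro _ ⟨x, hx, rfl⟩
  rw [ContinuousWithinAt, hinj.leftInvOn_invFunOn hx]
  intro U hU
  have himage : f '' (U ∩ s) ∈ 𝓝 (f x) :=
    hopen x hx (image_mem_map (inter_mem hU (hs.mem_nhds hx)))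
  rw [mem_map]
  refine mem_of_superset (mem_nhdsWithin_of_mem_nhds himage) ?_
  rintro _ ⟨y, ⟨hyU, hys⟩, rfl⟩
  rwa [mem_preimage, hinj.leftInvOn_invFunOn hys]

theorem exists_isCompact_image_eq (hinj : InjOn f s) (hs : IsOpen s)
    (hopen : ∀ x ∈ s, 𝓝 (f x) ≤ map f (𝓝 x)) {K : Set Y} (hK : K ⊆ f '' s)
    (hKc : IsCompact K) : ∃ L ⊆ s, IsCompact L ∧ f '' L = K := by
  refine ⟨invFunOn f s '' K, image_subset_iff.2 fun y hy => invFunOn_mem (hK hy),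
    hKc.image_of_continuousOn ((hinj.continuousOn_invFunOn_image hs hopen).mono hK), ?_⟩
  rw [image_image]
  exact (image_congr fun y hy => invFunOn_eq (hK hy)).trans (image_id' K)

end Set.InjOn

/-- `C_φ` has dense range in `O(Ω)` with the compact-open topology. -/
def DenseRangeComp {N : ℕ} (Ω : Set (CN N)) (φ : CN N → CN N) : Prop :=
  ∀ g : CN N → ℂ, DifferentiableOn ℂ g Ω → ∀ K ⊆ Ω, IsCompact K → ∀ ε > 0,
    ∃ G : CN N → ℂ, DifferentiableOn ℂ G Ω ∧ ∀ z ∈ K, ‖G (φ z) - g z‖ < ε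

section

variable {N : ℕ} {Ω : Set (CN N)} {φ : CN N → CN N}

theorem HypercyclicWrt.denseRangeComp {n : ℕ → ℕ} (h : HypercyclicWrt Ω φ n)
    (hφd : DifferentiableOn ℂ φ Ω) (hφm : MapsTo φ Ω Ω) (hpos : ∀ l, 0 < n l) :
    DenseRangeComp Ω φ := by
  obtain ⟨f, hfd, hf⟩ := h
  intro g hg K hK hKc ε hε
  obtain ⟨l, hl⟩ := hf g hg K hK hKc ε hε
  refine ⟨f ∘ φ^[(n l).pred], hfd.comp (hφd.iterate hφm _) (hφm.iterate _), fun z hz => ?_⟩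
  rw [comp_apply, ← comp_apply (f := φ^[_]), iterate_pred_comp_of_pos φ (hpos l)]
  exact hl z hz

theorem HypercyclicWrt.runAway_s3 {n : ℕ → ℕ} (h : HypercyclicWrt Ω φ n) :
    RunAway Ω (fun l => φ^[n l]) := by
  obtain ⟨f, hfd, hf⟩ := h
  intro K hK hKc L hL hLc
  obtain ⟨C, hC⟩ := hLc.exists_bound_of_continuousOn (hfd.continuousOn.mono hL)
  obtain ⟨l, hl⟩ := hf (fun _ => ((C + 1 : ℝ) : ℂ)) (differentiableOn_const _) K hK hKc 1 one_pos
  refine ⟨l, disjoint_left.2 ?_⟩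
  rintro _ ⟨z, hz, rfl⟩ hzL
  have hfar := norm_sub_norm_le ((C + 1 : ℝ) : ℂ) (f (φ^[n l] z))
  rw [norm_sub_rev, Complex.norm_real, Real.norm_eq_abs] at hfar
  linarith [hl z hz, hC _ hzL, le_abs_self (C + 1)]

theorem CompactlyDivergent.of_forall_runAway {f : ℕ → CN N → CN N}
    (h : ∀ k : ℕ → ℕ, StrictMono k → RunAway Ω (f ∘ k)) : CompactlyDivergent Ω f := by
  intro K hK hKc L hL hLc
  by_contra! hfreq
  obtain ⟨k, hk, hkL⟩ := extraction_of_frequently_atTop (frequently_atTop.2 hfreq)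
  obtain ⟨l, hl⟩ := h k hk K hK hKc L hL hLc
  exact hkL l hl

namespace DenseRangeComp

theorem injOn (h : DenseRangeComp Ω φ) : InjOn φ Ω := by
  intro a ha b hb hab
  by_contra hne
  obtain ⟨i, hi⟩ := Function.ne_iff.1 hne
  obtain ⟨G, -, hG⟩ := h (fun z => z i) (by fun_prop) {a, b} (insert_subset ha
    (singleton_subset_iff.2 hb)) (toFinite _).isCompact (dist (a i) (b i) / 2)
    (by linarith [dist_pos.2 hi])
  have ha' := hG a (mem_insert _ _)
  have hb' := hG b (mem_insert_of_mem _ rfl)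
  rw [hab, ← dist_eq_norm] at ha'
  rw [← dist_eq_norm] at hb'
  linarith [dist_triangle_left (a i) (b i) (G (φ b))]

theorem exists_leftInverse_approx (h : DenseRangeComp Ω φ) {K : Set (CN N)} (hK : K ⊆ Ω)
    (hKc : IsCompact K) {ε : ℝ} (hε : 0 < ε) :
    ∃ ψ : CN N → CN N, DifferentiableOn ℂ ψ Ω ∧ ∀ z ∈ K, ‖ψ (φ z) - z‖ < ε := by
  choose G hGd hG using fun i : Fin N => h (fun z => z i) (by fun_prop) K hK hKc ε hε
  exact ⟨fun w i => G i w, differentiableOn_pi.2 hGd,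
    fun z hz => (pi_norm_lt_iff hε).2 fun i => hG i z hz⟩

theorem injective_fderiv (h : DenseRangeComp Ω φ) (hΩ : IsOpen Ω) (hφd : DifferentiableOn ℂ φ Ω)
    (hφm : MapsTo φ Ω Ω) {z : CN N} (hz : z ∈ Ω) : Injective (fderiv ℂ φ z) := by
  obtain ⟨r, hr, hrΩ⟩ : ∃ r > 0, closedBall z r ⊆ Ω :=
    nhds_basis_closedBall.mem_iff.1 (hΩ.mem_nhds hz)
  obtain ⟨ψ, hψd, hψ⟩ :=
    h.exists_leftInverse_approx hrΩ (isCompact_closedBall z r) (by positivity : 0 < r / 4)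
  set u : CN N → CN N := fun w => ψ (φ w) - w
  have hmaps : MapsTo u (ball z r) (closedBall (u z) (r / 2)) := by
    intro w hw
    rw [mem_closedBall, dist_eq_norm]
    linarith [norm_sub_le (u w) (u z), hψ w (ball_subset_closedBall hw),
      hψ z (mem_closedBall_self hr.le)]
  have hud : DifferentiableOn ℂ u (ball z r) :=
    ((hψd.comp hφd hφm).sub differentiableOn_id).mono (ball_subset_closedBall.trans hrΩ)
  have hsmall : ‖fderiv ℂ u z‖ ≤ 1 / 2 := by
    simpa [div_div_cancel_left' hr.ne'] using
      Complex.norm_fderiv_le_div_of_mapsTo_ball hud hmaps hr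
  have hψz : DifferentiableAt ℂ ψ (φ z) := hψd.differentiableAt (hΩ.mem_nhds (hφm hz))
  have hφz : DifferentiableAt ℂ φ z := hφd.differentiableAt (hΩ.mem_nhds hz)
  have hderiv : fderiv ℂ u z = (fderiv ℂ ψ (φ z)).comp (fderiv ℂ φ z) - .id ℂ _ :=
    ((hψz.hasFDerivAt.comp z hφz.hasFDerivAt).sub (hasFDerivAt_id z)).fderiv
  rw [injective_iff_map_eq_zero]
  intro v hv
  have : ‖v‖ ≤ 1 / 2 * ‖v‖ :=
    calc ‖v‖ = ‖fderiv ℂ u z v‖ := by simp [hderiv, hv]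
      _ ≤ ‖fderiv ℂ u z‖ * ‖v‖ := (fderiv ℂ u z).le_opNorm v
      _ ≤ 1 / 2 * ‖v‖ := by gcongr
  exact norm_le_zero_iff.1 (by linarith [norm_nonneg v])

theorem rungeIn_image (h : DenseRangeComp Ω φ) (hΩ : IsOpen Ω) (hφd : DifferentiableOn ℂ φ Ω)
    (hφm : MapsTo φ Ω Ω) : RungeIn (φ '' Ω) Ω := by
  have hopen : ∀ z ∈ Ω, 𝓝 (φ z) ≤ map φ (𝓝 z) := fun z hz =>
    (Complex.map_nhds_eq_of_injective_fderiv hφd hΩ hz (h.injective_fderiv hΩ hφd hφm hz)).ge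
  intro f hf K hK hKc ε hε
  obtain ⟨L, hL, hLc, rfl⟩ := h.injOn.exists_isCompact_image_eq hΩ hopen hK hKc
  obtain ⟨G, hGd, hG⟩ := h (f ∘ φ) (hf.comp hφd (mapsTo_image φ Ω)) L hL hLc ε hε
  exact ⟨G, hGd, forall_mem_image.2 hG⟩

end DenseRangeComp

end

theorem stmt_3_general {N : ℕ} (Ω : Set (CN N)) (hdom : CNDomain Ω)
    (φ : CN N → CN N) (hφd : DifferentiableOn ℂ φ Ω) (hφm : MapsTo φ Ω Ω)
    (n : ℕ → ℕ) (hn : StrictMono n)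
    (hhyp : HereditarilyHypercyclicWrt Ω φ n) :
    InjOn φ Ω ∧ RungeIn (φ '' Ω) Ω ∧ CompactlyDivergent Ω (fun l => φ^[n l]) := by
  have hdense : DenseRangeComp Ω φ :=
    (hhyp (· + 1) (strictMono_id.add_const 1)).denseRangeComp hφd hφm
      fun l => (n 0).zero_le.trans_lt (hn l.succ_pos)
  exact ⟨hdense.injOn, hdense.rungeIn_image hdom.1 hφd hφm,
    CompactlyDivergent.of_forall_runAway fun k hk => (hhyp k hk).runAway_s3⟩

theorem stmt_3 {N : ℕ} (Ω : Set (CN N)) (hdom : CNDomain Ω) (hpsc : Pseudoconvex Ω)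
    (φ : CN N → CN N) (hφd : DifferentiableOn ℂ φ Ω) (hφm : MapsTo φ Ω Ω)
    (n : ℕ → ℕ) (hn : StrictMono n)
    (hhyp : HereditarilyHypercyclicWrt Ω φ n) :
    InjOn φ Ω ∧ RungeIn (φ '' Ω) Ω ∧ CompactlyDivergent Ω (fun l => φ^[n l]) :=
  stmt_3_general Ω hdom φ hφd hφm n hn hhyp
end
end

section
/- Let Ω ⊆ ℂ^N be a pseudoconvex domain. Then the conditions (c1) φ injective, (c2) φ(Ω) Runge with respect to Ω, (c3) (φ^{n_l}) run-away are sufficient for hypercyclicity in Ω if and only if the conditions (h1) φ injective, (h2) φ(Ω) Runge with respect to Ω, (h3) (φ^{n_l}) compactly divergent are sufficient for hereditary hypercyclicity in Ω. That is: [for every holomorphic φ : Ω → Ω and every strictly increasing sequence (n_l) satisfying (c1), (c2), (c3), C_φ is hypercyclic with respect to (n_l)] if and only if [for every holomorphic φ : Ω → Ω and every strictly increasing sequence (n_l) satisfying (h1), (h2), (h3), C_φ is hereditarily hypercyclic with respect to (n_l)]. -/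
open Set Filter Topology Metric

noncomputable section

/-!
A run-away sequence of self-maps has a compactly divergent subsequence: fix a compact exhaustion
`E j` of `Ω` and choose `k j` so that `f (k j)` pushes `E j` off itself. Hence (c3) can always be
upgraded to (h3) along a subsequence, and hypercyclicity along a subsequence of `(n l)` is
hypercyclicity along `(n l)`. Conversely, (h3) passes to subsequences and implies (c3).
-/

theorem IsOpen.exists_monotone_compact_exhaustion {X : Type*} [TopologicalSpace X]
    [LocallyCompactSpace X] [SecondCountableTopology X] {U : Set X} (hU : IsOpen U) :
    ∃ E : ℕ → Set X, (∀ j, IsCompact (E j)) ∧ (∀ j, E j ⊆ U) ∧ Monotone E ∧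
      ∀ S, IsCompact S → S ⊆ U → ∃ j, S ⊆ E j := by
  have := hU.locallyCompactSpace
  let E : CompactExhaustion U := default
  refine ⟨fun j => (↑) '' E j, fun j => Subtype.isCompact_iff.1 (E.isCompact j),
    fun j => Subtype.coe_image_subset U (E j), fun i j hij => image_mono (E.subset hij), ?_⟩
  intro S hS hSU
  obtain ⟨j, hj⟩ := E.exists_superset_of_isCompact (s := (↑) ⁻¹' S)
    (Subtype.isCompact_iff.2 (by rwa [Subtype.image_preimage_coe, inter_eq_right.2 hSU]))
  refine ⟨j, fun z hz => ⟨⟨z, hSU hz⟩, hj hz, rfl⟩⟩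

section RunAway

variable {N : ℕ} {Ω : Set (CN N)} {f : ℕ → CN N → CN N}

theorem RunAway.frequently_disjoint (hra : RunAway Ω f) (hcont : ∀ l, ContinuousOn (f l) Ω)
    (hmaps : ∀ l, MapsTo (f l) Ω Ω) {K L : Set (CN N)} (hKΩ : K ⊆ Ω) (hK : IsCompact K)
    (hLΩ : L ⊆ Ω) (hL : IsCompact L) : ∃ᶠ l in atTop, Disjoint (f l '' K) L := by
  rcases K.eq_empty_or_nonempty with rfl | ⟨z, hz⟩
  · exact Frequently.of_forall fun _ => by simp
  refine frequently_atTop.2 fun m => ?_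
  -- Adding the earlier images `f i '' K`, `i < m`, to `L` forces the run-away index past `m`.
  let L' := L ∪ ⋃ i ∈ Iio m, f i '' K
  have hL'Ω : L' ⊆ Ω :=
    union_subset hLΩ (iUnion₂_subset fun i _ => (hmaps i).image_subset.trans' (image_mono hKΩ))
  have hL' : IsCompact L' :=
    hL.union ((finite_Iio m).isCompact_biUnion fun i _ => hK.image_of_continuousOn
      ((hcont i).mono hKΩ))
  obtain ⟨l, hl⟩ := hra K hKΩ hK L' hL'Ω hL'
  refine ⟨l, not_lt.1 fun hlm => ?_, hl.mono_right subset_union_left⟩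
  have hmem : f l z ∈ L' := Or.inr (mem_biUnion hlm (mem_image_of_mem _ hz))
  exact disjoint_left.1 hl (mem_image_of_mem _ hz) hmem

theorem RunAway.exists_compactlyDivergent_subseq (hΩ : IsOpen Ω) (hra : RunAway Ω f)
    (hcont : ∀ l, ContinuousOn (f l) Ω) (hmaps : ∀ l, MapsTo (f l) Ω Ω) :
    ∃ k : ℕ → ℕ, StrictMono k ∧ CompactlyDivergent Ω (f ∘ k) := by
  obtain ⟨E, hEc, hEΩ, hEmono, hEabs⟩ := hΩ.exists_monotone_compact_exhaustion
  obtain ⟨k, hk, hkE⟩ := extraction_forall_of_frequently fun j =>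
    hra.frequently_disjoint hcont hmaps (hEΩ j) (hEc j) (hEΩ j) (hEc j)
  refine ⟨k, hk, fun K hKΩ hK L hLΩ hL => ?_⟩
  obtain ⟨j, hj⟩ := hEabs (K ∪ L) (hK.union hL) (union_subset hKΩ hLΩ)
  refine ⟨j, fun l hl => (hkE l).mono (image_mono ?_) ?_⟩
  · exact subset_union_left.trans (hj.trans (hEmono hl))
  · exact subset_union_right.trans (hj.trans (hEmono hl))

end RunAway

theorem CompactlyDivergent.comp_strictMono {N : ℕ} {Ω : Set (CN N)} {f : ℕ → CN N → CN N}
    (hf : CompactlyDivergent Ω f) {k : ℕ → ℕ} (hk : StrictMono k) :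
    CompactlyDivergent Ω (f ∘ k) := by
  intro K hKΩ hK L hLΩ hL
  obtain ⟨l₀, hl₀⟩ := hf K hKΩ hK L hLΩ hL
  exact ⟨l₀, fun l hl => hl₀ (k l) (hl.trans hk.le_apply)⟩

theorem CompactlyDivergent.runAway {N : ℕ} {Ω : Set (CN N)} {f : ℕ → CN N → CN N}
    (hf : CompactlyDivergent Ω f) : RunAway Ω f := by
  intro K hKΩ hK L hLΩ hL
  obtain ⟨l₀, hl₀⟩ := hf K hKΩ hK L hLΩ hL
  exact ⟨l₀, hl₀ l₀ le_rfl⟩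

theorem HypercyclicWrt.of_comp {N : ℕ} {Ω : Set (CN N)} {φ : CN N → CN N} {n k : ℕ → ℕ}
    (h : HypercyclicWrt Ω φ (n ∘ k)) : HypercyclicWrt Ω φ n := by
  obtain ⟨f, hf, hdense⟩ := h
  refine ⟨f, hf, fun g hg K hKΩ hK ε hε => ?_⟩
  obtain ⟨l, hl⟩ := hdense g hg K hKΩ hK ε hε
  exact ⟨k l, hl⟩

theorem stmt_12_general {N : ℕ} (Ω : Set (CN N)) (hdom : CNDomain Ω) :
    (∀ φ : CN N → CN N, DifferentiableOn ℂ φ Ω → MapsTo φ Ω Ω →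
      ∀ n : ℕ → ℕ, StrictMono n →
        InjOn φ Ω → RungeIn (φ '' Ω) Ω → RunAway Ω (fun l => φ^[n l]) →
          HypercyclicWrt Ω φ n) ↔
    (∀ φ : CN N → CN N, DifferentiableOn ℂ φ Ω → MapsTo φ Ω Ω →
      ∀ n : ℕ → ℕ, StrictMono n →
        InjOn φ Ω → RungeIn (φ '' Ω) Ω → CompactlyDivergent Ω (fun l => φ^[n l]) →
          HereditarilyHypercyclicWrt Ω φ n) := by
  constructor
  · intro H φ hφ hmaps n hn hinj hrunge hcd k hk
    exact H φ hφ hmaps (n ∘ k) (hn.comp hk) hinj hrunge (hcd.comp_strictMono hk).runAway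
  · intro H φ hφ hmaps n hn hinj hrunge hra
    obtain ⟨k, hk, hcd⟩ := hra.exists_compactlyDivergent_subseq hdom.1
      (fun l => hφ.continuousOn.iterate hmaps (n l)) (fun l => hmaps.iterate (n l))
    exact HypercyclicWrt.of_comp (k := k)
      (H φ hφ hmaps (n ∘ k) (hn.comp hk) hinj hrunge hcd id strictMono_id)

theorem stmt_12 {N : ℕ} (Ω : Set (CN N)) (hdom : CNDomain Ω) (hpsc : Pseudoconvex Ω) :
    (∀ φ : CN N → CN N, DifferentiableOn ℂ φ Ω → MapsTo φ Ω Ω →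
      ∀ n : ℕ → ℕ, StrictMono n →
        InjOn φ Ω → RungeIn (φ '' Ω) Ω → RunAway Ω (fun l => φ^[n l]) →
          HypercyclicWrt Ω φ n) ↔
    (∀ φ : CN N → CN N, DifferentiableOn ℂ φ Ω → MapsTo φ Ω Ω →
      ∀ n : ℕ → ℕ, StrictMono n →
        InjOn φ Ω → RungeIn (φ '' Ω) Ω → CompactlyDivergent Ω (fun l => φ^[n l]) →
          HereditarilyHypercyclicWrt Ω φ n) :=
  stmt_12_general Ω hdom
end
end

section
/- Let Ω ⊆ ℂ^N be a bounded domain such that for each boundary point a ∈ ∂Ω there exists a holomorphic function f_a : Ω → ℂ with |f_a| < 1 on Ω and f_a(z) → 1 as z → a with z ∈ Ω (a peak function for a). Then for every z₀ ∈ Ω one has lim_{z → ∂Ω} c_Ω(z, z₀) = ∞, i.e. for every M > 0 there exists a compact set L ⊆ Ω such that c_Ω(z, z₀) > M for all z ∈ Ω \ L. -/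
/-!
At a boundary point `a`, composing the peak function with the disc automorphism that sends its
value at `z₀` to `0` gives a competitor for `c*_Ω(z, z₀)` whose modulus tends to `1` as `z → a`.
Removing these neighbourhoods of boundary points from the compact set `closure Ω` leaves a
compact subset of `Ω` outside which `c*_Ω(·, z₀)` exceeds any given `τ < 1`. For `c_Ω` to blow
up one also needs `c*_Ω(z, z₀) < 1` on all of `Ω`: by the Schwarz–Pick lemma on small balls, the
points at which all competitors stay uniformly away from the unit circle form a subset of `Ω`
that is open and closed in `Ω` and contains `z₀`.
-/

open Set Filter Topology Metric

noncomputable section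

open ComplexConjugate

def mobius (a w : ℂ) : ℂ := (w - a) / (1 - conj a * w)

theorem mobius_self (a : ℂ) : mobius a a = 0 := by
  simp [mobius]

theorem sq_norm_sub_add_mul_eq (a w : ℂ) :
    ‖w - a‖ ^ 2 + (1 - ‖a‖ ^ 2) * (1 - ‖w‖ ^ 2) = ‖1 - conj a * w‖ ^ 2 := by
  simp only [← Complex.normSq_eq_norm_sq, Complex.normSq_apply, Complex.sub_re, Complex.sub_im,
    Complex.mul_re, Complex.mul_im, Complex.one_re, Complex.one_im, Complex.conj_re,
    Complex.conj_im]
  ring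

theorem one_sub_conj_mul_ne_zero {a w : ℂ} (ha : ‖a‖ < 1) (hw : ‖w‖ ≤ 1) :
    1 - conj a * w ≠ 0 := by
  refine sub_ne_zero.2 fun h => ?_
  have : ‖conj a * w‖ < 1 := by
    rw [norm_mul, RCLike.norm_conj]
    nlinarith [norm_nonneg a, norm_nonneg w]
  simp [← h] at this

theorem norm_mobius_comm (a w : ℂ) : ‖mobius a w‖ = ‖mobius w a‖ := by
  have : ‖1 - conj a * w‖ = ‖1 - conj w * a‖ := by
    rw [← RCLike.norm_conj (1 - conj a * w)]
    simp [mul_comm]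
  rw [mobius, mobius, norm_div, norm_div, norm_sub_rev, this]

theorem norm_mobius_lt_one {a w : ℂ} (ha : ‖a‖ < 1) (hw : ‖w‖ < 1) : ‖mobius a w‖ < 1 := by
  have hden := norm_pos_iff.2 (one_sub_conj_mul_ne_zero ha hw.le)
  rw [mobius, norm_div, div_lt_one hden]
  refine lt_of_pow_lt_pow_left₀ 2 hden.le ?_
  have := sq_norm_sub_add_mul_eq a w
  nlinarith [mul_pos (by nlinarith [norm_nonneg a] : (0 : ℝ) < 1 - ‖a‖ ^ 2)
    (by nlinarith [norm_nonneg w] : (0 : ℝ) < 1 - ‖w‖ ^ 2)]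

theorem norm_mobius_one {a : ℂ} (ha : ‖a‖ < 1) : ‖mobius a 1‖ = 1 := by
  have h : 1 - a ≠ 0 := sub_ne_zero.2 fun h => by simp [← h] at ha
  rw [mobius, mul_one, norm_div, ← RCLike.norm_conj (1 - conj a), map_sub, map_one,
    Complex.conj_conj, div_self (norm_ne_zero_iff.2 h)]

theorem DifferentiableOn.mobius {E : Type*} [NormedAddCommGroup E] [NormedSpace ℂ E]
    {F : E → ℂ} {s : Set E} (hF : DifferentiableOn ℂ F s) (hF1 : ∀ x ∈ s, ‖F x‖ < 1) {a : ℂ}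
    (ha : ‖a‖ < 1) : DifferentiableOn ℂ (fun x => mobius a (F x)) s := by
  simp only [_root_.mobius, div_eq_mul_inv]
  refine (hF.sub_const a).mul
    (((differentiableOn_const _).sub ((differentiableOn_const _).mul hF)).inv fun x hx => ?_)
  exact one_sub_conj_mul_ne_zero ha (hF1 x hx).le

-- `(2 + ‖a‖) / 3` is a simpler weakening of the sharp bound `(2 ‖a‖ + 1) / (2 + ‖a‖)`.
theorem norm_le_of_norm_mobius_le_half {a w : ℂ} (ha : ‖a‖ < 1) (hw : ‖w‖ < 1)
    (h : ‖mobius a w‖ ≤ 1 / 2) : ‖w‖ ≤ (2 + ‖a‖) / 3 := by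
  have hden := norm_pos_iff.2 (one_sub_conj_mul_ne_zero ha hw.le)
  rw [mobius, norm_div, div_le_iff₀ hden] at h
  have hid := sq_norm_sub_add_mul_eq a w
  have hsub : 3 * (‖w‖ - ‖a‖) ^ 2 ≤ (1 - ‖a‖ ^ 2) * (1 - ‖w‖ ^ 2) := by
    have := abs_norm_sub_norm_le w a
    nlinarith [sq_abs (‖w‖ - ‖a‖), abs_nonneg (‖w‖ - ‖a‖), norm_nonneg (w - a)]
  by_contra! hlt
  -- both sides of `hsub` are then separated by `4 (1 - ‖a‖) ^ 2 / 3`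
  have h1 : 2 * (1 - ‖a‖) / 3 < ‖w‖ - ‖a‖ := by linarith
  have h2 : 1 - ‖w‖ < (1 - ‖a‖) / 3 := by linarith
  have hα : 0 < 1 - ‖a‖ := by linarith
  have h3 : (1 + ‖a‖) * (1 + ‖w‖) ≤ 4 := by nlinarith [norm_nonneg a, norm_nonneg w]
  have h4 : (2 * (1 - ‖a‖) / 3) ^ 2 < (‖w‖ - ‖a‖) ^ 2 := by gcongr
  have h5 : (1 - ‖a‖) * (1 - ‖w‖) * ((1 + ‖a‖) * (1 + ‖w‖)) ≤
      (1 - ‖a‖) * ((1 - ‖a‖) / 3) * 4 := by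
    gcongr
  nlinarith

section NormedSpace

variable {E : Type*} [NormedAddCommGroup E] [NormedSpace ℂ E]

theorem norm_mobius_le_dist_div {F : E → ℂ} {x y : E} {R : ℝ}
    (hF : DifferentiableOn ℂ F (ball x R)) (hF1 : ∀ z ∈ ball x R, ‖F z‖ < 1)
    (hy : y ∈ ball x R) : ‖mobius (F x) (F y)‖ ≤ dist y x / R := by
  have hx : ‖F x‖ < 1 := hF1 x (mem_ball_self (pos_of_mem_ball hy))
  have hmaps : MapsTo (fun z => mobius (F x) (F z)) (ball x R)
      (closedBall (mobius (F x) (F x)) 1) := fun z hz => by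
    rw [mobius_self, mem_closedBall_zero_iff]
    exact (norm_mobius_lt_one hx (hF1 z hz)).le
  simpa [mobius_self, div_eq_inv_mul] using
    Complex.dist_le_div_mul_dist_of_mapsTo_ball (hF.mobius hF1 hx) hmaps hy

theorem norm_le_of_mem_ball_half {Ω : Set E} {F : E → ℂ} (hF : DifferentiableOn ℂ F Ω)
    (hF1 : ∀ z ∈ Ω, ‖F z‖ < 1) {x y : E} {R : ℝ} (hR : ball x R ⊆ Ω) (hy : y ∈ ball x (R / 2)) :
    ‖F y‖ ≤ (2 + ‖F x‖) / 3 ∧ ‖F x‖ ≤ (2 + ‖F y‖) / 3 := by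
  have hR0 : 0 < R := by linarith [pos_of_mem_ball hy]
  have hyR : y ∈ ball x R := ball_subset_ball (by linarith) hy
  have hx := hF1 x (hR (mem_ball_self hR0))
  have hy1 := hF1 y (hR hyR)
  have hρ : ‖mobius (F x) (F y)‖ ≤ 1 / 2 := by
    refine (norm_mobius_le_dist_div (hF.mono hR) (fun z hz => hF1 z (hR hz)) hyR).trans ?_
    rw [div_le_iff₀ hR0]
    linarith [mem_ball.1 hy]
  exact ⟨norm_le_of_norm_mobius_le_half hx hy1 hρ,
    norm_le_of_norm_mobius_le_half hy1 hx (norm_mobius_comm (F x) (F y) ▸ hρ)⟩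

theorem exists_lt_one_forall_norm_le_of_isPreconnected {Ω : Set E} (hΩ : IsOpen Ω)
    (hΩc : IsPreconnected Ω) {𝓕 : Set (E → ℂ)}
    (h𝓕 : ∀ F ∈ 𝓕, DifferentiableOn ℂ F Ω ∧ ∀ z ∈ Ω, ‖F z‖ < 1) {z₀ z : E} (hz₀ : z₀ ∈ Ω)
    (hz : z ∈ Ω) (h₀ : ∃ b < 1, ∀ F ∈ 𝓕, ‖F z₀‖ ≤ b) : ∃ b < 1, ∀ F ∈ 𝓕, ‖F z‖ ≤ b := by
  let P : E → Prop := fun w => ∃ b < 1, ∀ F ∈ 𝓕, ‖F w‖ ≤ b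
  have step : ∀ b < (1 : ℝ), (2 + b) / 3 < 1 := fun b hb => by linarith
  refine hΩc.induction₂' (fun x y => P x → P y) (fun x hx => ?_)
    (fun _ _ _ _ _ _ hxy hyz hx => hyz (hxy hx)) hz₀ hz h₀
  obtain ⟨R, hR0, hR⟩ := Metric.isOpen_iff.1 hΩ x hx
  filter_upwards [nhdsWithin_le_nhds (ball_mem_nhds x (half_pos hR0))] with y hy
  constructor
  · rintro ⟨b, hb, hbF⟩
    refine ⟨(2 + b) / 3, step b hb, fun F hF => ?_⟩
    have := (norm_le_of_mem_ball_half (h𝓕 F hF).1 (h𝓕 F hF).2 hR hy).1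
    linarith [hbF F hF]
  · rintro ⟨b, hb, hbF⟩
    refine ⟨(2 + b) / 3, step b hb, fun F hF => ?_⟩
    have := (norm_le_of_mem_ball_half (h𝓕 F hF).1 (h𝓕 F hF).2 hR hy).2
    linarith [hbF F hF]

end NormedSpace

theorem exists_isCompact_forall_of_eventually_frontier {X : Type*} [PseudoMetricSpace X]
    [ProperSpace X] {Ω : Set X} {p : X → Prop} (hΩ : IsOpen Ω) (hb : Bornology.IsBounded Ω)
    (h : ∀ a ∈ frontier Ω, ∀ᶠ z in 𝓝[Ω] a, p z) : ∃ L ⊆ Ω, IsCompact L ∧ ∀ z ∈ Ω \ L, p z := by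
  set S := interior {z | z ∈ Ω → p z}
  have hfr : frontier Ω ⊆ S := fun a ha =>
    mem_interior_iff_mem_nhds.2 (eventually_nhdsWithin_iff.1 (h a ha))
  refine ⟨closure Ω \ S, fun x hx => ?_, ?_, fun z hz => ?_⟩
  · have : x ∈ closure Ω \ frontier Ω := ⟨hx.1, fun h => hx.2 (hfr h)⟩
    rwa [closure_sdiff_frontier, hΩ.interior_eq] at this
  · exact Metric.isCompact_of_isClosed_isBounded (isClosed_closure.sdiff isOpen_interior)
      (hb.closure.subset sdiff_subset)
  · have hzS : z ∈ S := by_contra fun h => hz.2 ⟨subset_closure hz.1, h⟩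
    exact interior_subset hzS hz.1

theorem tendsto_log_one_add_div_one_sub_atTop :
    Tendsto (fun m : ℝ => Real.log ((1 + m) / (1 - m))) (𝓝[<] 1) atTop := by
  have hnum : Tendsto (fun m : ℝ => 1 + m) (𝓝[<] 1) (𝓝 2) :=
    ((continuous_const.add continuous_id).tendsto' 1 2 (by norm_num)).mono_left nhdsWithin_le_nhds
  have hden : Tendsto (fun m : ℝ => 1 - m) (𝓝[<] 1) (𝓝[>] 0) := by
    refine tendsto_nhdsWithin_iff.2 ⟨?_, ?_⟩
    · exact ((continuous_const.sub continuous_id).tendsto' 1 0 (sub_self 1)).mono_left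
        nhdsWithin_le_nhds
    · filter_upwards [self_mem_nhdsWithin] with m hm
      exact sub_pos.2 (mem_Iio.1 hm)
  simp only [div_eq_mul_inv]
  exact Real.tendsto_log_atTop.comp
    (hnum.pos_mul_atTop two_pos (tendsto_inv_nhdsGT_zero.comp hden))

section MobiusDist

variable {N : ℕ} {Ω : Set (CN N)}

theorem mobiusDist_le {z w : CN N} {b : ℝ}
    (h : ∀ F : CN N → ℂ, DifferentiableOn ℂ F Ω → (∀ x ∈ Ω, ‖F x‖ < 1) → F w = 0 → ‖F z‖ ≤ b) :
    mobiusDist Ω z w ≤ b :=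
  csSup_le ⟨_, 0, differentiableOn_const 0, by simp, rfl, rfl⟩
    fun _ ⟨F, hFd, hF1, hF0, hr⟩ => hr ▸ h F hFd hF1 hF0

theorem norm_le_mobiusDist {z w : CN N} (hz : z ∈ Ω) {F : CN N → ℂ}
    (hFd : DifferentiableOn ℂ F Ω) (hF1 : ∀ x ∈ Ω, ‖F x‖ < 1) (hF0 : F w = 0) :
    ‖F z‖ ≤ mobiusDist Ω z w :=
  le_csSup ⟨1, fun _ ⟨_, _, hG1, _, hr⟩ => hr ▸ (hG1 z hz).le⟩ ⟨F, hFd, hF1, hF0, rfl⟩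

theorem mobiusDist_lt_one (hΩ : IsOpen Ω) (hΩc : IsPreconnected Ω) {z z₀ : CN N}
    (hz : z ∈ Ω) (hz₀ : z₀ ∈ Ω) : mobiusDist Ω z z₀ < 1 := by
  obtain ⟨b, hb, hbF⟩ := exists_lt_one_forall_norm_le_of_isPreconnected hΩ hΩc
    (𝓕 := {F | DifferentiableOn ℂ F Ω ∧ (∀ x ∈ Ω, ‖F x‖ < 1) ∧ F z₀ = 0})
    (fun F hF => ⟨hF.1, hF.2.1⟩) hz₀ hz ⟨0, one_pos, fun F hF => by simp [hF.2.2]⟩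
  exact (mobiusDist_le fun F hFd hF1 hF0 => hbF F ⟨hFd, hF1, hF0⟩).trans_lt hb

theorem tendsto_mobiusDist_of_peak {z₀ a : CN N} (hz₀ : z₀ ∈ Ω) {f : CN N → ℂ}
    (hfd : DifferentiableOn ℂ f Ω) (hf1 : ∀ z ∈ Ω, ‖f z‖ < 1)
    (hfa : Tendsto f (𝓝[Ω] a) (𝓝 1)) :
    Tendsto (fun z => mobiusDist Ω z z₀) (𝓝[Ω] a) (𝓝 1) := by
  have hc := hf1 z₀ hz₀
  have hG : Tendsto (fun z => ‖mobius (f z₀) (f z)‖) (𝓝[Ω] a) (𝓝 1) := by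
    rw [← norm_mobius_one hc]
    refine (Tendsto.div (hfa.sub_const _) (tendsto_const_nhds.sub (hfa.const_mul _)) ?_).norm
    exact one_sub_conj_mul_ne_zero hc norm_one.le
  refine tendsto_of_tendsto_of_tendsto_of_le_of_le' hG tendsto_const_nhds ?_ ?_
  all_goals filter_upwards [self_mem_nhdsWithin] with z hz
  · exact norm_le_mobiusDist hz (hfd.mobius hf1 hc) (fun x hx => norm_mobius_lt_one hc (hf1 x hx))
      (mobius_self _)
  · exact mobiusDist_le fun F _ hF1 _ => (hF1 z hz).le

theorem tendsto_caratDist_atTop_of_peak (hΩ : IsOpen Ω) (hΩc : IsPreconnected Ω) {z₀ a : CN N}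
    (hz₀ : z₀ ∈ Ω) {f : CN N → ℂ} (hfd : DifferentiableOn ℂ f Ω) (hf1 : ∀ z ∈ Ω, ‖f z‖ < 1)
    (hfa : Tendsto f (𝓝[Ω] a) (𝓝 1)) :
    Tendsto (fun z => caratDist Ω z z₀) (𝓝[Ω] a) atTop := by
  refine tendsto_log_one_add_div_one_sub_atTop.comp (tendsto_nhdsWithin_iff.2 ⟨?_, ?_⟩)
  · exact tendsto_mobiusDist_of_peak hz₀ hfd hf1 hfa
  · filter_upwards [self_mem_nhdsWithin] with z hz
    exact mobiusDist_lt_one hΩ hΩc hz hz₀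

end MobiusDist

theorem stmt_14 {N : ℕ} (Ω : Set (CN N)) (hdom : CNDomain Ω)
    (hbdd : Bornology.IsBounded Ω)
    (hpeak : ∀ a ∈ frontier Ω, ∃ f : CN N → ℂ, DifferentiableOn ℂ f Ω ∧
      (∀ z ∈ Ω, ‖f z‖ < 1) ∧ Tendsto f (𝓝[Ω] a) (𝓝 (1 : ℂ))) :
    ∀ z₀ ∈ Ω, ∀ M : ℝ, 0 < M → ∃ L : Set (CN N), L ⊆ Ω ∧ IsCompact L ∧
      ∀ z ∈ Ω \ L, M < caratDist Ω z z₀ := by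
  intro z₀ hz₀ M _
  refine exists_isCompact_forall_of_eventually_frontier hdom.1 hbdd fun a ha => ?_
  obtain ⟨f, hfd, hf1, hfa⟩ := hpeak a ha
  exact (tendsto_caratDist_atTop_of_peak hdom.1 hdom.2.isPreconnected hz₀ hfd hf1
    hfa).eventually_gt_atTop M
end
end

section
/- Let Ω ⊆ ℂ^N be a pseudoconvex domain and φ : Ω → Ω a holomorphic map. If C_φ is hypercyclic (with respect to the full sequence n_l = l), then C_φ is hypercyclic with respect to every increasing arithmetic sequence of natural numbers, i.e. with respect to (lμ + ν)_{l ∈ ℕ} for every μ ∈ ℕ with μ ≥ 1 and every ν ∈ {0, …, μ − 1}. -/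
open Set Filter Topology Metric

noncomputable section

/-!
Let `f` be a continuous self-map with a dense orbit of `x`, let `μ ≥ 1`, and let
`D j := residueOrbitClosure f x μ j` be the closure of `{f^[n] x | n ≡ j [MOD μ]}`. These finitely many closed sets cover the space, `f^[k]` maps
`D j` into `D (j + k)`, and `J := {j | x ∈ D j}` is a subgroup of `ZMod μ`. A point with a dense
orbit cannot lie both in some `D j` with `j ∈ J` and in some `D k` with `k ∉ J`; so if a connected
set of points with dense orbits contains `x ∈ D 0` and `f x ∈ D 1`, then `1 ∈ J`, hence
`J = ZMod μ` and every `D j` is the whole space.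

For a continuous linear operator `T` (Ansari's theorem) the segment from `x` to `T x` is such a
set: `(1 - s) • x + s • T x = s • (T - λ) x` with `λ = (s - 1) / s`, and `T - λ` commutes with
`T` and has dense range, since otherwise `T` acts as multiplication by `λ` on a nonzero
Hausdorff quotient, which the orbit would force to be a line with `{λ ^ n}` dense in it.

`C_φ` acts on the closure of the holomorphic functions in `C(Ω, ℂ)` with the compact-open
topology, and hypercyclicity along `n` is density of the `C_φ^[n l]`-orbit there.
-/

open Function

section OrbitResidues

variable {X : Type*} [TopologicalSpace X] {f : X → X} {x y : X} {μ : ℕ}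

def residueOrbitClosure (f : X → X) (x : X) (μ : ℕ) (j : ZMod μ) : Set X :=
  closure ((fun n => f^[n] x) '' {n | (n : ZMod μ) = j})

lemma iterate_mem_residueOrbitClosure (f : X → X) (x : X) (μ n : ℕ) :
    f^[n] x ∈ residueOrbitClosure f x μ n :=
  subset_closure ⟨n, rfl, rfl⟩

lemma self_mem_residueOrbitClosure_zero (f : X → X) (x : X) (μ : ℕ) :
    x ∈ residueOrbitClosure f x μ 0 := by
  simpa using iterate_mem_residueOrbitClosure f x μ 0

lemma exists_mem_residueOrbitClosure [NeZero μ] (hx : Dense (range fun n => f^[n] x)) (z : X) :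
    ∃ j, z ∈ residueOrbitClosure f x μ j := by
  refine mem_iUnion.mp (closure_minimal ?_ (isClosed_iUnion_of_finite fun _ => isClosed_closure)
    (hx z))
  rintro _ ⟨n, rfl⟩
  exact mem_iUnion.mpr ⟨n, iterate_mem_residueOrbitClosure f x μ n⟩

lemma residueOrbitClosure_subset (hf : Continuous f) {i : ZMod μ}
    (hy : y ∈ residueOrbitClosure f x μ i) (j : ZMod μ) :
    residueOrbitClosure f y μ j ⊆ residueOrbitClosure f x μ (i + j) := by
  refine closure_minimal ?_ isClosed_closure
  rintro _ ⟨m, rfl, rfl⟩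
  refine map_mem_closure (hf.iterate m) hy ?_
  rintro _ ⟨n, rfl, rfl⟩
  exact ⟨m + n, by simp [add_comm], iterate_add_apply f m n x⟩

lemma mem_residueOrbitClosure_self_add (hf : Continuous f) {i j : ZMod μ}
    (hi : x ∈ residueOrbitClosure f x μ i) (hj : x ∈ residueOrbitClosure f x μ j) :
    x ∈ residueOrbitClosure f x μ (i + j) :=
  residueOrbitClosure_subset hf hi j hj

lemma mem_residueOrbitClosure_self_nsmul (hf : Continuous f) {i : ZMod μ}
    (hi : x ∈ residueOrbitClosure f x μ i) (n : ℕ) :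
    x ∈ residueOrbitClosure f x μ (n • i) := by
  induction n with
  | zero => simpa using self_mem_residueOrbitClosure_zero f x μ
  | succ n ih => rw [succ_nsmul]; exact mem_residueOrbitClosure_self_add hf ih hi

lemma mem_residueOrbitClosure_self_neg [NeZero μ] (hf : Continuous f) {i : ZMod μ}
    (hi : x ∈ residueOrbitClosure f x μ i) :
    x ∈ residueOrbitClosure f x μ (-i) := by
  have h : (μ - 1) • i = -i := by
    rw [nsmul_eq_mul, Nat.cast_pred (NeZero.pos μ), ZMod.natCast_self, zero_sub, neg_one_mul]
  simpa [h] using mem_residueOrbitClosure_self_nsmul hf hi (μ - 1)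

lemma mem_residueOrbitClosure_self_of_mem_of_mem [NeZero μ] (hf : Continuous f)
    (hy : Dense (range fun n => f^[n] y)) {i j : ZMod μ}
    (hyi : y ∈ residueOrbitClosure f x μ i) (hyj : y ∈ residueOrbitClosure f x μ j)
    (hi : x ∈ residueOrbitClosure f x μ i) : x ∈ residueOrbitClosure f x μ j := by
  obtain ⟨a, ha⟩ := exists_mem_residueOrbitClosure (μ := μ) hy x
  have hia := residueOrbitClosure_subset hf hyi a ha
  have hja := residueOrbitClosure_subset hf hyj a ha
  have h := mem_residueOrbitClosure_self_add hf
    (mem_residueOrbitClosure_self_add hf hja (mem_residueOrbitClosure_self_neg hf hia)) hi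
  rwa [show j + a + -(i + a) + i = j by abel] at h

lemma self_mem_residueOrbitClosure_one [NeZero μ] (hf : Continuous f) {C : Set X}
    (hC : IsPreconnected C) (hCd : ∀ y ∈ C, Dense (range fun n => f^[n] y))
    (hxC : x ∈ C) (hfxC : f x ∈ C) : x ∈ residueOrbitClosure f x μ 1 := by
  by_contra h1
  set J := {i | x ∈ residueOrbitClosure f x μ i}
  have hclosed (s : Set (ZMod μ)) : IsClosed (⋃ i ∈ s, residueOrbitClosure f x μ i) :=
    s.toFinite.isClosed_biUnion fun _ _ => isClosed_closure
  have hcover :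
      C ⊆ (⋃ i ∈ J, residueOrbitClosure f x μ i) ∪ ⋃ i ∈ Jᶜ, residueOrbitClosure f x μ i := by
    intro z _
    obtain ⟨i, hi⟩ := exists_mem_residueOrbitClosure (μ := μ) (hCd x hxC) z
    by_cases hiJ : i ∈ J
    · exact Or.inl (mem_biUnion hiJ hi)
    · exact Or.inr (mem_biUnion hiJ hi)
  have hx0 := self_mem_residueOrbitClosure_zero f x μ
  have hfx1 : f x ∈ residueOrbitClosure f x μ 1 := by
    simpa using iterate_mem_residueOrbitClosure f x μ 1
  obtain ⟨y, hyC, hyJ, hyJc⟩ := isPreconnected_closed_iff.mp hC _ _ (hclosed J) (hclosed Jᶜ)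
    hcover ⟨x, hxC, mem_biUnion (show (0 : ZMod μ) ∈ J from hx0) hx0⟩
    ⟨f x, hfxC, mem_biUnion (show (1 : ZMod μ) ∈ Jᶜ from h1) hfx1⟩
  obtain ⟨i, hiJ, hyi⟩ := mem_iUnion₂.mp hyJ
  obtain ⟨k, hkJ, hyk⟩ := mem_iUnion₂.mp hyJc
  exact hkJ (mem_residueOrbitClosure_self_of_mem_of_mem hf (hCd y hyC) hyi hyk hiJ)

theorem residueOrbitClosure_eq_univ_of_isPreconnected [NeZero μ] (hf : Continuous f)
    {C : Set X} (hC : IsPreconnected C) (hCd : ∀ y ∈ C, Dense (range fun n => f^[n] y))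
    (hxC : x ∈ C) (hfxC : f x ∈ C) (j : ZMod μ) : residueOrbitClosure f x μ j = univ := by
  have hx1 := self_mem_residueOrbitClosure_one (μ := μ) hf hC hCd hxC hfxC
  have hxk (k : ZMod μ) : x ∈ residueOrbitClosure f x μ k := by
    simpa using mem_residueOrbitClosure_self_nsmul hf hx1 k.val
  rw [eq_univ_iff_forall]
  intro z
  obtain ⟨k, hk⟩ := exists_mem_residueOrbitClosure (μ := μ) (hCd x hxC) z
  simpa using residueOrbitClosure_subset hf (hxk (j - k)) k hk

theorem dense_range_iterate_mul_add_of_isPreconnected (hf : Continuous f) {C : Set X}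
    (hC : IsPreconnected C) (hCd : ∀ y ∈ C, Dense (range fun n => f^[n] y))
    (hxC : x ∈ C) (hfxC : f x ∈ C) {ν : ℕ} (hν : ν < μ) :
    Dense (range fun l => f^[l * μ + ν] x) := by
  have : NeZero μ := ⟨by omega⟩
  have hν' := residueOrbitClosure_eq_univ_of_isPreconnected hf hC hCd hxC hfxC (ν : ZMod μ)
  refine dense_iff_closure_eq.mpr (eq_univ_of_univ_subset (hν' ▸ closure_mono ?_))
  rintro _ ⟨n, hn, rfl⟩
  have hmod : n % μ = ν := by
    rw [← Nat.mod_eq_of_lt hν]; exact (ZMod.natCast_eq_natCast_iff' n ν μ).mp hn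
  exact ⟨n / μ, by simp only [← hmod, Nat.div_add_mod']⟩

lemma Dense.range_iterate_of_commute {g : X → X} (hg : Continuous g) (hgd : DenseRange g)
    (hfg : Function.Commute g f) (hx : Dense (range fun n => f^[n] x)) :
    Dense (range fun n => f^[n] (g x)) := by
  have h : (range fun n => f^[n] (g x)) = g '' range fun n => f^[n] x := by
    rw [← range_comp]; exact congrArg range (funext fun n => ((hfg.iterate_right n).eq x).symm)
  rw [h]; exact hgd.dense_image hg hx

end OrbitResidues

lemma dense_range_iterate_subtype_iff {α : Type*} [TopologicalSpace α] {s : Set α}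
    {f : α → α} {g : s → s} (hg : ∀ y, (g y : α) = f y) (k : ℕ → ℕ) (y : s) :
    Dense (range fun n => g^[k n] y) ↔ s ⊆ closure (range fun n => f^[k n] y) := by
  have hval : Subtype.val '' (range fun n => g^[k n] y) = range fun n => f^[k n] y := by
    rw [← range_comp]
    exact congrArg range (funext fun n => (Semiconj.iterate_right (f := Subtype.val) hg (k n)) y)
  simp only [Dense, closure_subtype, hval, Subtype.forall]
  rfl

lemma ContinuousMap.mem_closure_iff_forall_isCompact {α β : Type*} [TopologicalSpace α]
    [PseudoMetricSpace β] {u : C(α, β)} {s : Set C(α, β)} :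
    u ∈ closure s ↔
      ∀ K, IsCompact K → ∀ ε > 0, ∃ v ∈ s, ∀ z ∈ K, dist (u z) (v z) < ε := by
  rw [mem_closure_iff_nhds_basis
    (nhds_basis_uniformity' Metric.uniformity_basis_dist.compactConvergenceUniformity)]
  exact ⟨fun h K hK ε hε => h (K, ε) ⟨hK, hε⟩, fun h Kε hKε => h Kε.1 hKε.1 Kε.2 hKε.2⟩

section AnsariTheorem

variable {𝕜 E : Type*} [RCLike 𝕜] [AddCommGroup E] [Module 𝕜 E] [TopologicalSpace E]
  [IsTopologicalAddGroup E] [ContinuousSMul 𝕜 E]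

lemma not_dense_range_pow (c : 𝕜) : ¬ Dense (range (c ^ · : ℕ → 𝕜)) := by
  intro h
  rcases le_or_gt ‖c‖ 1 with hc | hc
  · obtain ⟨_, ⟨n, rfl⟩, hn⟩ := Metric.mem_closure_iff.mp (h 2) 1 one_pos
    have := norm_sub_norm_le (2 : 𝕜) (c ^ n)
    rw [norm_pow, RCLike.norm_ofNat] at this
    rw [dist_eq_norm] at hn
    linarith [pow_le_one₀ (n := n) (norm_nonneg c) hc]
  · obtain ⟨_, ⟨n, rfl⟩, hn⟩ := Metric.mem_closure_iff.mp (h 0) 1 one_pos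
    rw [dist_zero_left, norm_pow] at hn
    linarith [one_le_pow₀ (n := n) hc.le]

lemma Dense.denseRange_sub_smul {T : E →L[𝕜] E} {x : E}
    (hx : Dense (range fun n => T^[n] x)) (c : 𝕜) : DenseRange fun y => T y - c • y := by
  set M := (LinearMap.range ((T : E →ₗ[𝕜] E) - c • LinearMap.id)).topologicalClosure
  have : IsClosed (M : Set E) := Submodule.isClosed_topologicalClosure _
  suffices hM : M = ⊤ by
    refine (Submodule.dense_iff_topologicalClosure_eq_top.mpr hM).mono ?_
    rintro _ ⟨y, rfl⟩
    exact ⟨y, by simp⟩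
  set π := M.mkQ
  have hπT (y : E) : π (T y) = c • π y := by
    rw [← sub_eq_zero, ← map_smul, ← map_sub, Submodule.mkQ_apply, Submodule.Quotient.mk_eq_zero]
    exact Submodule.le_topologicalClosure _ ⟨y, by simp⟩
  have hπorbit (n : ℕ) : π (T^[n] x) = c ^ n • π x := by
    induction n with
    | zero => simp
    | succ n ih => rw [iterate_succ_apply', hπT, ih, smul_smul, pow_succ']
  have hdense : Dense (range fun n : ℕ => c ^ n • π x) := by
    have := M.mkQ_surjective.denseRange.dense_image M.continuous_mkQ hx
    rwa [← range_comp, show π ∘ (fun n => T^[n] x) = _ from funext hπorbit] at this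
  set ℓ := LinearMap.toSpanSingleton 𝕜 (E ⧸ M) (π x)
  have hℓ : Function.Surjective ℓ := by
    rw [← LinearMap.range_eq_top, ← LinearMap.span_singleton_eq_range, eq_top_iff]
    intro z _
    refine closure_minimal ?_ (Submodule.closed_of_finiteDimensional _) (hdense z)
    rintro _ ⟨n, rfl⟩
    exact Submodule.smul_mem _ _ (Submodule.mem_span_singleton_self _)
  by_cases hx0 : π x = 0
  · rw [← Submodule.Quotient.subsingleton_iff]
    refine ⟨fun a b => ?_⟩
    obtain ⟨a, rfl⟩ := hℓ a; obtain ⟨b, rfl⟩ := hℓ b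
    simp [ℓ, hx0]
  · let e := (LinearEquiv.ofBijective ℓ ⟨smul_left_injective 𝕜 hx0, hℓ⟩).toContinuousLinearEquiv
    have he (n : ℕ) : e.symm (c ^ n • π x) = c ^ n :=
      e.symm_apply_eq.mpr (LinearMap.toSpanSingleton_apply _ _ _ _).symm
    refine absurd ?_ (not_dense_range_pow c)
    have := e.symm.surjective.denseRange.dense_image e.symm.continuous hdense
    rwa [← range_comp, show ⇑e.symm ∘ (fun n : ℕ => c ^ n • π x) = _ from funext he] at this

lemma Dense.range_iterate_convex_combination {T : E →L[𝕜] E} {x : E}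
    (hx : Dense (range fun n => T^[n] x)) (s : ℝ) :
    Dense (range fun n => T^[n] ((1 - (s : 𝕜)) • x + (s : 𝕜) • T x)) := by
  rcases eq_or_ne s 0 with rfl | hs
  · simpa using hx
  have hs' : (s : 𝕜) ≠ 0 := RCLike.ofReal_ne_zero.mpr hs
  set c : 𝕜 := (s - 1) / s
  have hSx : (s : 𝕜) • (T x - c • x) = (1 - (s : 𝕜)) • x + (s : 𝕜) • T x := by
    rw [smul_sub, smul_smul, mul_div_cancel₀ _ hs']
    module
  rw [← hSx]
  refine Dense.range_iterate_of_commute (g := fun y => (s : 𝕜) • (T y - c • y)) (by fun_prop)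
    ?_ (fun y => by simp only [map_sub, map_smul]) hx
  have hsurj : Surjective ((s : 𝕜) • · : E → E) := fun z => ⟨(s : 𝕜)⁻¹ • z, smul_inv_smul₀ hs' z⟩
  exact hsurj.denseRange.comp (hx.denseRange_sub_smul c) (continuous_const_smul _)

theorem Dense.range_iterate_mul_add {T : E →L[𝕜] E} {x : E}
    (hx : Dense (range fun n => T^[n] x)) {μ ν : ℕ} (hν : ν < μ) :
    Dense (range fun l => T^[l * μ + ν] x) := by
  set F : ℝ → E := fun s => (1 - (s : 𝕜)) • x + (s : 𝕜) • T x
  have hF : Continuous F := by fun_prop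
  refine dense_range_iterate_mul_add_of_isPreconnected T.continuous (isPreconnected_range hF) ?_
    ⟨0, by simp [F]⟩ ⟨1, by simp [F]⟩ hν
  rintro _ ⟨s, rfl⟩
  exact hx.range_iterate_convex_combination s

theorem subset_closure_range_iterate_mul_add {T : E →L[𝕜] E} {p : Submodule 𝕜 E}
    (hp : ∀ u ∈ p, T u ∈ p) {x : E} (hx : x ∈ p)
    (hdense : (p : Set E) ⊆ closure (range fun n => T^[n] x)) {μ ν : ℕ} (hν : ν < μ) :
    (p : Set E) ⊆ closure (range fun l => T^[l * μ + ν] x) := by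
  have hq : ∀ u ∈ p.topologicalClosure, T u ∈ p.topologicalClosure := fun _ hu =>
    map_mem_closure T.continuous hu fun _ hv => hp _ hv
  have horbit_iff := dense_range_iterate_subtype_iff (f := T) (g := T.restrict hq) (fun _ => rfl)
    (y := ⟨x, p.le_topologicalClosure hx⟩)
  have horbit : Dense (range fun n => (T.restrict hq)^[n] ⟨x, p.le_topologicalClosure hx⟩) :=
    (horbit_iff id).mpr
      (p.topologicalClosure_coe.subset.trans (closure_minimal hdense isClosed_closure))
  exact fun y hy => (horbit_iff _).mp (horbit.range_iterate_mul_add hν) (p.le_topologicalClosure hy)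

end AnsariTheorem

section CompositionOperator

variable {N : ℕ} {Ω : Set (CN N)}

def holomorphicRestrictions (Ω : Set (CN N)) : Submodule ℂ C(Ω, ℂ) where
  carrier := {u | ∃ g : CN N → ℂ, DifferentiableOn ℂ g Ω ∧ ∀ z : Ω, u z = g z}
  add_mem' := by
    rintro u v ⟨g, hg, hu⟩ ⟨h, hh, hv⟩
    exact ⟨g + h, hg.add hh, fun z => by simp [hu z, hv z]⟩
  zero_mem' := ⟨0, differentiableOn_const 0, fun _ => rfl⟩
  smul_mem' := by
    rintro c u ⟨g, hg, hu⟩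
    exact ⟨c • g, hg.const_smul c, fun z => by simp [hu z]⟩

lemma restrict_mem_holomorphicRestrictions {g : CN N → ℂ} (hg : DifferentiableOn ℂ g Ω) :
    (⟨Ω.domRestrict g, hg.continuousOn.domRestrict⟩ : C(Ω, ℂ)) ∈ holomorphicRestrictions Ω :=
  ⟨g, hg, fun _ => rfl⟩

variable {φ : CN N → CN N} {Φ : C(Ω, Ω)}

lemma iterate_compCLM_apply (hΦ : ∀ z, (Φ z : CN N) = φ z) (k : ℕ) {u : C(Ω, ℂ)}
    {f : CN N → ℂ} (hu : ∀ z, u z = f z) (z : Ω) :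
    ((ContinuousMap.compCLM ℂ ℂ Φ)^[k] u) z = f (φ^[k] z) := by
  induction k generalizing u f with
  | zero => exact hu z
  | succ k ih =>
    rw [iterate_succ_apply, ih (f := f ∘ φ) (fun z => by simp [hu, hΦ]), iterate_succ_apply']
    rfl

lemma compCLM_mem_holomorphicRestrictions (hΦ : ∀ z, (Φ z : CN N) = φ z)
    (hφ : DifferentiableOn ℂ φ Ω) {u : C(Ω, ℂ)} (hu : u ∈ holomorphicRestrictions Ω) :
    ContinuousMap.compCLM ℂ ℂ Φ u ∈ holomorphicRestrictions Ω := by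
  obtain ⟨g, hg, hu⟩ := hu
  have hmaps : MapsTo φ Ω Ω := fun z hz => hΦ ⟨z, hz⟩ ▸ (Φ ⟨z, hz⟩).2
  exact ⟨g ∘ φ, hg.comp hφ hmaps, fun z => by simp [hu, hΦ]⟩

theorem hypercyclicWrt_iff (hΦ : ∀ z, (Φ z : CN N) = φ z) (n : ℕ → ℕ) :
    HypercyclicWrt Ω φ n ↔ ∃ u ∈ holomorphicRestrictions Ω,
      (holomorphicRestrictions Ω : Set C(Ω, ℂ)) ⊆
        closure (range fun l => (ContinuousMap.compCLM ℂ ℂ Φ)^[n l] u) := by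
  simp only [subset_def, SetLike.mem_coe, ContinuousMap.mem_closure_iff_forall_isCompact,
    exists_range_iff]
  constructor
  · rintro ⟨f, hf, hdense⟩
    refine ⟨_, restrict_mem_holomorphicRestrictions hf, ?_⟩
    rintro v ⟨g, hg, hv⟩ K hK ε hε
    obtain ⟨l, hl⟩ := hdense g hg (Subtype.val '' K) (image_subset_iff.mpr fun z _ => z.2)
      (hK.image continuous_subtype_val) ε hε
    refine ⟨l, fun z hz => ?_⟩
    rw [hv, iterate_compCLM_apply hΦ _ (fun _ => rfl), dist_comm, dist_eq_norm]
    exact hl z ⟨z, hz, rfl⟩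
  · rintro ⟨u, ⟨f, hf, hu⟩, hdense⟩
    refine ⟨f, hf, fun g hg K hKΩ hK ε hε => ?_⟩
    obtain ⟨l, hl⟩ := hdense _ (restrict_mem_holomorphicRestrictions hg) (Subtype.val ⁻¹' K)
      (IsInducing.subtypeVal.isCompact_preimage' hK (by rwa [Subtype.range_coe])) ε hε
    refine ⟨l, fun z hz => ?_⟩
    have := hl ⟨z, hKΩ hz⟩ hz
    rwa [iterate_compCLM_apply hΦ _ hu, dist_comm, dist_eq_norm] at this

end CompositionOperator

theorem stmt_18_general {N : ℕ} (Ω : Set (CN N))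
    (φ : CN N → CN N) (hφd : DifferentiableOn ℂ φ Ω) (hφm : MapsTo φ Ω Ω)
    (hhyp : HypercyclicWrt Ω φ (fun l => l)) :
    ∀ μ : ℕ, 1 ≤ μ → ∀ ν : ℕ, ν < μ →
      HypercyclicWrt Ω φ (fun l => l * μ + ν) := by
  intro μ _ ν hν
  let Φ : C(Ω, Ω) := ⟨hφm.restrict φ Ω Ω, hφd.continuousOn.mapsToRestrict hφm⟩
  have hΦ (z : Ω) : (Φ z : CN N) = φ z := rfl
  rw [hypercyclicWrt_iff hΦ] at hhyp ⊢
  obtain ⟨u, hu, hdense⟩ := hhyp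
  exact ⟨u, hu, subset_closure_range_iterate_mul_add
    (fun _ hv => compCLM_mem_holomorphicRestrictions hΦ hφd hv) hu hdense hν⟩

theorem stmt_18 {N : ℕ} (Ω : Set (CN N)) (hdom : CNDomain Ω) (hpsc : Pseudoconvex Ω)
    (φ : CN N → CN N) (hφd : DifferentiableOn ℂ φ Ω) (hφm : MapsTo φ Ω Ω)
    (hhyp : HypercyclicWrt Ω φ (fun l => l)) :
    ∀ μ : ℕ, 1 ≤ μ → ∀ ν : ℕ, ν < μ →
      HypercyclicWrt Ω φ (fun l => l * μ + ν) :=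
  stmt_18_general Ω φ hφd hφm hhyp
end
end
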